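/- arXiv:2306.08806 — 2 statements merged into one kernel-verified Lean document; each statement's English description precedes it below -/
import Mathlib

section
/- Let d ≥ 1 be an integer and σ > d/2, and let Φ : ℝ^d → ℝ be a continuous integrable function whose Fourier transform satisfies c₁(1+‖ω‖₂²)^{-σ} ≤ Φ̂(ω) ≤ c₂(1+‖ω‖₂²)^{-σ} for all ω ∈ ℝ^d, for constants 0 < c₁ ≤ c₂. Then for every δ ∈ (0,1] and every integrable and square-integrable f : ℝ^d → ℂ, the norm equivalence √c₁ ‖f‖_{Φ_δ} ≤ ‖f‖_{W^{σ,2}(ℝ^d)} ≤ √c₂ δ^{-σ} ‖f‖_{Φ_δ} holds (as inequalities of possibly infinite quantities). -/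
open MeasureTheory ENNReal
open scoped RealInnerProductSpace

/-- The Fourier transform `û(ω) = (2π)^{-d/2} ∫ u(x) e^{-i x·ω} dx`. -/
noncomputable def ftrans {d : ℕ} (f : EuclideanSpace ℝ (Fin d) → ℂ)
    (ω : EuclideanSpace ℝ (Fin d)) : ℂ :=
  (((2 * Real.pi) ^ (-(d : ℝ) / 2) : ℝ) : ℂ) *
    ∫ x, Complex.exp (-(Complex.I * ((inner ℝ x ω : ℝ) : ℂ))) * f x

/-! The symbol bounds give, pointwise in `ω`, `c₁ ≤ Φ̂(δω) (1+‖ω‖²)^σ ≤ c₂ δ^{-2σ}`: the lower bound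
because `1 + ‖δω‖² ≤ 1 + ‖ω‖²`, the upper one because `1 + ‖ω‖² ≤ δ⁻² (1 + ‖δω‖²)` for `0 < δ ≤ 1`.
Multiplying by `|f̂(ω)|² / Φ̂(δω)` and integrating yields both inequalities of squared norms. -/

section Lintegral

variable {α : Type*} [MeasurableSpace α] {μ : Measure α} {u v : α → ℝ≥0∞} {p : ℝ}

lemma rpow_mul_rpow_lintegral_le_rpow_lintegral {C : ℝ≥0∞} (hp : 0 ≤ p)
    (h : ∀ x, C * u x ≤ v x) :
    C ^ p * (∫⁻ x, u x ∂μ) ^ p ≤ (∫⁻ x, v x ∂μ) ^ p := by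
  rw [← ENNReal.mul_rpow_of_nonneg _ _ hp]
  exact ENNReal.rpow_le_rpow ((lintegral_const_mul_le _ _).trans (lintegral_mono h)) hp

lemma rpow_lintegral_le_rpow_mul_rpow_lintegral {C : ℝ≥0∞} (hC : C ≠ ∞) (hp : 0 ≤ p)
    (h : ∀ x, u x ≤ C * v x) :
    (∫⁻ x, u x ∂μ) ^ p ≤ C ^ p * (∫⁻ x, v x ∂μ) ^ p := by
  rw [← ENNReal.mul_rpow_of_nonneg _ _ hp, ← lintegral_const_mul' _ _ hC]
  exact ENNReal.rpow_le_rpow (lintegral_mono h) hp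

end Lintegral

lemma ENNReal.ofReal_sqrt_eq_rpow {c : ℝ} (hc : 0 ≤ c) :
    ENNReal.ofReal √c = ENNReal.ofReal c ^ (1 / 2 : ℝ) := by
  rw [ENNReal.ofReal_rpow_of_nonneg hc (by norm_num), Real.sqrt_eq_rpow]

lemma ENNReal.ofReal_mul_mul_div_ofReal {a : ℝ≥0∞} {q w : ℝ} (hq : 0 < q) :
    ENNReal.ofReal (q * w) * (a / ENNReal.ofReal q) = a * ENNReal.ofReal w := by
  rw [ENNReal.ofReal_mul hq.le, mul_comm (ENNReal.ofReal q), mul_assoc,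
    ENNReal.mul_div_cancel (ENNReal.ofReal_pos.2 hq).ne' ENNReal.ofReal_ne_top, mul_comm]

lemma ENNReal.ofReal_mul_div_ofReal_le {a : ℝ≥0∞} {c q w : ℝ} (hq : 0 < q) (h : c ≤ q * w) :
    ENNReal.ofReal c * (a / ENNReal.ofReal q) ≤ a * ENNReal.ofReal w := by
  rw [← ENNReal.ofReal_mul_mul_div_ofReal hq]
  gcongr

lemma ENNReal.mul_ofReal_le_ofReal_mul_div {a : ℝ≥0∞} {q w C : ℝ} (hq : 0 < q) (h : q * w ≤ C) :
    a * ENNReal.ofReal w ≤ ENNReal.ofReal C * (a / ENNReal.ofReal q) := by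
  rw [← ENNReal.ofReal_mul_mul_div_ofReal hq]
  gcongr

section SobolevWeight

variable {E : Type*} [NormedAddCommGroup E] [NormedSpace ℝ E] {σ δ : ℝ}

lemma one_add_norm_smul_sq_rpow_le (hσ : 0 ≤ σ) (hδ : |δ| ≤ 1) (ω : E) :
    (1 + ‖δ • ω‖ ^ 2) ^ σ ≤ (1 + ‖ω‖ ^ 2) ^ σ := by
  have hnorm : ‖δ • ω‖ ≤ ‖ω‖ := by
    rw [norm_smul, Real.norm_eq_abs]; exact mul_le_of_le_one_left (norm_nonneg _) hδ
  gcongr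

lemma one_add_norm_sq_rpow_le_scaled (hσ : 0 ≤ σ) (hδ0 : 0 < δ) (hδ1 : δ ≤ 1) (ω : E) :
    (1 + ‖ω‖ ^ 2) ^ σ ≤ (δ ^ (-σ)) ^ 2 * (1 + ‖δ • ω‖ ^ 2) ^ σ := by
  have hscale : 1 + ‖ω‖ ^ 2 ≤ (δ ^ 2)⁻¹ * (1 + ‖δ • ω‖ ^ 2) := by
    rw [norm_smul, Real.norm_eq_abs, abs_of_pos hδ0, mul_add, mul_one, mul_pow,
      inv_mul_cancel_left₀ (by positivity)]
    gcongr
    exact one_le_inv₀ (by positivity) |>.2 (pow_le_one₀ hδ0.le hδ1)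
  have hpow : (δ ^ (-σ)) ^ 2 = ((δ ^ 2)⁻¹) ^ σ := by
    rw [← Real.rpow_natCast, ← Real.rpow_mul hδ0.le, Real.inv_rpow (by positivity),
      ← Real.rpow_natCast, ← Real.rpow_mul hδ0.le, ← Real.rpow_neg hδ0.le]
    ring_nf
  rw [hpow, ← Real.mul_rpow (by positivity) (by positivity)]
  gcongr

variable {φ : E → ℝ} {c : ℝ}

lemma le_mul_one_add_norm_sq_rpow_of_lower_bound (hσ : 0 ≤ σ) (hδ : |δ| ≤ 1) (hc : 0 ≤ c)
    (hlow : ∀ ω, c * (1 + ‖ω‖ ^ 2) ^ (-σ) ≤ φ ω) (ω : E) :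
    c ≤ φ (δ • ω) * (1 + ‖ω‖ ^ 2) ^ σ := by
  have hφ : 0 ≤ φ (δ • ω) := le_trans (by positivity) (hlow _)
  calc c = c * (1 + ‖δ • ω‖ ^ 2) ^ (-σ) * (1 + ‖δ • ω‖ ^ 2) ^ σ := by
        rw [mul_assoc, ← Real.rpow_add (by positivity), neg_add_cancel, Real.rpow_zero, mul_one]
    _ ≤ φ (δ • ω) * (1 + ‖δ • ω‖ ^ 2) ^ σ := by gcongr; exact hlow _
    _ ≤ φ (δ • ω) * (1 + ‖ω‖ ^ 2) ^ σ :=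
        mul_le_mul_of_nonneg_left (one_add_norm_smul_sq_rpow_le hσ hδ ω) hφ

lemma mul_one_add_norm_sq_rpow_le_of_upper_bound (hσ : 0 ≤ σ) (hδ0 : 0 < δ) (hδ1 : δ ≤ 1)
    (hup : ∀ ω, φ ω ≤ c * (1 + ‖ω‖ ^ 2) ^ (-σ)) (ω : E) (hφ : 0 ≤ φ (δ • ω)) :
    φ (δ • ω) * (1 + ‖ω‖ ^ 2) ^ σ ≤ c * (δ ^ (-σ)) ^ 2 := by
  calc φ (δ • ω) * (1 + ‖ω‖ ^ 2) ^ σ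
      ≤ c * (1 + ‖δ • ω‖ ^ 2) ^ (-σ) * ((δ ^ (-σ)) ^ 2 * (1 + ‖δ • ω‖ ^ 2) ^ σ) := by
        gcongr
        · exact hφ.trans (hup _)
        · exact hup _
        · exact one_add_norm_sq_rpow_le_scaled hσ hδ0 hδ1 ω
    _ = c * (δ ^ (-σ)) ^ 2 * ((1 + ‖δ • ω‖ ^ 2) ^ (-σ) * (1 + ‖δ • ω‖ ^ 2) ^ σ) := by ring
    _ = c * (δ ^ (-σ)) ^ 2 := by
        rw [← Real.rpow_add (by positivity), neg_add_cancel, Real.rpow_zero, mul_one]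

end SobolevWeight

theorem stmt3_general (d : ℕ) (σ : ℝ) (hσ : (d : ℝ) / 2 < σ)
    (c₁ c₂ : ℝ) (hc₁ : 0 < c₁) (hc₁₂ : c₁ ≤ c₂)
    (Φhat : EuclideanSpace ℝ (Fin d) → ℝ)
    (hlow : ∀ ω, c₁ * (1 + ‖ω‖ ^ 2) ^ (-σ) ≤ Φhat ω)
    (hup : ∀ ω, Φhat ω ≤ c₂ * (1 + ‖ω‖ ^ 2) ^ (-σ)) :
    ∀ δ : ℝ, 0 < δ → δ ≤ 1 →
      ∀ f : EuclideanSpace ℝ (Fin d) → ℂ, Integrable f → MemLp f 2 →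
        (ENNReal.ofReal (Real.sqrt c₁) *
            (∫⁻ ω, (‖ftrans f ω‖₊ : ℝ≥0∞) ^ 2 / ENNReal.ofReal (Φhat (δ • ω))) ^ (1/2 : ℝ)
          ≤ (∫⁻ ω, (‖ftrans f ω‖₊ : ℝ≥0∞) ^ 2
              * ENNReal.ofReal ((1 + ‖ω‖ ^ 2) ^ σ)) ^ (1/2 : ℝ)) ∧
        ((∫⁻ ω, (‖ftrans f ω‖₊ : ℝ≥0∞) ^ 2
              * ENNReal.ofReal ((1 + ‖ω‖ ^ 2) ^ σ)) ^ (1/2 : ℝ)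
          ≤ ENNReal.ofReal (Real.sqrt c₂ * δ ^ (-σ)) *
            (∫⁻ ω, (‖ftrans f ω‖₊ : ℝ≥0∞) ^ 2 / ENNReal.ofReal (Φhat (δ • ω))) ^ (1/2 : ℝ)) := by
  intro δ hδ0 hδ1 f _ _
  have hσ0 : 0 ≤ σ := (by positivity : (0 : ℝ) ≤ d / 2).trans hσ.le
  have hΦhat_pos (ω) : 0 < Φhat ω := lt_of_lt_of_le (by positivity) (hlow ω)
  have hc₂ : 0 ≤ c₂ := hc₁.le.trans hc₁₂
  constructor
  · rw [ENNReal.ofReal_sqrt_eq_rpow hc₁.le]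
    exact rpow_mul_rpow_lintegral_le_rpow_lintegral (by norm_num) fun ω =>
      ENNReal.ofReal_mul_div_ofReal_le (hΦhat_pos _) <|
        le_mul_one_add_norm_sq_rpow_of_lower_bound hσ0 (abs_le.2 ⟨by linarith, hδ1⟩) hc₁.le hlow ω
  · have hsqrt : √c₂ * δ ^ (-σ) = √(c₂ * (δ ^ (-σ)) ^ 2) := by
      rw [Real.sqrt_mul hc₂, Real.sqrt_sq (by positivity)]
    rw [hsqrt, ENNReal.ofReal_sqrt_eq_rpow (mul_nonneg hc₂ (sq_nonneg _))]
    exact rpow_lintegral_le_rpow_mul_rpow_lintegral ENNReal.ofReal_ne_top (by norm_num) fun ω =>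
      ENNReal.mul_ofReal_le_ofReal_mul_div (hΦhat_pos _) <|
        mul_one_add_norm_sq_rpow_le_of_upper_bound hσ0 hδ0 hδ1 hup ω (hΦhat_pos _).le

theorem stmt3 (d : ℕ) (hd : 1 ≤ d) (σ : ℝ) (hσ : (d : ℝ) / 2 < σ)
    (c₁ c₂ : ℝ) (hc₁ : 0 < c₁) (hc₁₂ : c₁ ≤ c₂)
    (Φ : EuclideanSpace ℝ (Fin d) → ℝ) (hΦc : Continuous Φ)
    (hΦi : Integrable (fun x => (Φ x : ℂ)))
    (Φhat : EuclideanSpace ℝ (Fin d) → ℝ)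
    (hΦhat : ∀ ω, ftrans (fun x => (Φ x : ℂ)) ω = ((Φhat ω : ℝ) : ℂ))
    (hlow : ∀ ω, c₁ * (1 + ‖ω‖ ^ 2) ^ (-σ) ≤ Φhat ω)
    (hup : ∀ ω, Φhat ω ≤ c₂ * (1 + ‖ω‖ ^ 2) ^ (-σ)) :
    ∀ δ : ℝ, 0 < δ → δ ≤ 1 →
      ∀ f : EuclideanSpace ℝ (Fin d) → ℂ, Integrable f → MemLp f 2 →
        (ENNReal.ofReal (Real.sqrt c₁) *
            (∫⁻ ω, (‖ftrans f ω‖₊ : ℝ≥0∞) ^ 2 / ENNReal.ofReal (Φhat (δ • ω))) ^ (1/2 : ℝ)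
          ≤ (∫⁻ ω, (‖ftrans f ω‖₊ : ℝ≥0∞) ^ 2
              * ENNReal.ofReal ((1 + ‖ω‖ ^ 2) ^ σ)) ^ (1/2 : ℝ)) ∧
        ((∫⁻ ω, (‖ftrans f ω‖₊ : ℝ≥0∞) ^ 2
              * ENNReal.ofReal ((1 + ‖ω‖ ^ 2) ^ σ)) ^ (1/2 : ℝ)
          ≤ ENNReal.ofReal (Real.sqrt c₂ * δ ^ (-σ)) *
            (∫⁻ ω, (‖ftrans f ω‖₊ : ℝ≥0∞) ^ 2 / ENNReal.ofReal (Φhat (δ • ω))) ^ (1/2 : ℝ)) :=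
  stmt3_general d σ hσ c₁ c₂ hc₁ hc₁₂ Φhat hlow hup
end

section
/- Let d ≥ 1 be an integer and σ > d/2 + 2, and let Φ : ℝ^d → ℝ be a continuous, even, integrable function whose Fourier transform satisfies c₁(1+‖ω‖₂²)^{-σ} ≤ Φ̂(ω) ≤ c₂(1+‖ω‖₂²)^{-σ} for all ω ∈ ℝ^d, for constants 0 < c₁ ≤ c₂. Then there exists a constant C > 0, depending only on d, σ, c₁, c₂, such that for every δ ∈ (0,1], every finite set Y ⊂ ℝ^d with at least two points, every continuous, integrable and square-integrable function u : ℝ^d → ℂ with ‖u‖_{W^{σ,2}(ℝ^d)} < ∞, and every function s = Σ_{y∈Y} c_y Φ_δ(·−y) with real coefficients satisfying the interpolation conditions s(y) = u(y) for all y ∈ Y, one has ‖u − s‖_{W^{σ,2}(ℝ^d)} ≤ C δ^{-σ} ‖u‖_{W^{σ,2}(ℝ^d)}. -/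
/-!
On the Fourier side the kernel sum is `ŝ = Φ̂(δ·) E` with the trigonometric polynomial
`E(ω) = ∑ c_y e^{-i⟪y, ω⟫}`, and Fourier inversion gives `∫ f̂ Ē = (2π)^{d/2} ∑ c_y f(y)`. The
interpolation conditions therefore say `∫ û Ē = ∫ ŝ Ē`, i.e. `û - ŝ ⊥ ŝ` in `L²(1 / Φ̂(δ·))`, so by
Pythagoras `‖û - ŝ‖ ≤ ‖û‖` in that space. The two-sided bound on `Φ̂` compares this weight with the
Sobolev weight `(1 + ‖ω‖²)^σ`, losing the factors `c₁⁻¹` and `c₂ δ^{-2σ}`.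
-/

open MeasureTheory ENNReal
open scoped RealInnerProductSpace

open Complex ComplexConjugate FourierTransform
open scoped Real

section WeightedL2

variable {α : Type*} [MeasurableSpace α] {μ : Measure α}

lemma lintegral_norm_sub_sq_mul_inv_le {f g E : α → ℂ} {W : α → ℝ} (hW : ∀ x, 0 < W x)
    (hg : ∀ x, g x = W x * E x) (hf : Integrable (fun x => ‖f x‖ ^ 2 * (W x)⁻¹) μ)
    (hfE : Integrable (fun x => f x * conj (E x)) μ)
    (hgE : Integrable (fun x => g x * conj (E x)) μ)
    (horth : ∫ x, f x * conj (E x) ∂μ = ∫ x, g x * conj (E x) ∂μ) :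
    ∫⁻ x, ENNReal.ofReal (‖f x - g x‖ ^ 2 * (W x)⁻¹) ∂μ
      ≤ ∫⁻ x, ENNReal.ofReal (‖f x‖ ^ 2 * (W x)⁻¹) ∂μ := by
  -- Since `g = W E`, dividing by `W` turns `f ḡ` into `f Ē` and `‖g‖²` into `g Ē`.
  have hexpand : ∀ x, ‖f x - g x‖ ^ 2 * (W x)⁻¹
      = ‖f x‖ ^ 2 * (W x)⁻¹ - 2 * (f x * conj (E x)).re + (g x * conj (E x)).re := by
    intro x
    have := (hW x).ne'
    simp only [hg, Complex.sq_norm, Complex.normSq_sub, map_mul, Complex.conj_ofReal,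
      Complex.normSq_ofReal]
    rw [mul_left_comm, Complex.re_ofReal_mul, mul_assoc (W x : ℂ), Complex.mul_conj,
      ← Complex.ofReal_mul, Complex.ofReal_re]
    field_simp
    ring
  have hnonneg : ∀ h : α → ℂ, 0 ≤ᵐ[μ] fun x => ‖h x‖ ^ 2 * (W x)⁻¹ :=
    fun h => .of_forall fun x => mul_nonneg (sq_nonneg _) (inv_nonneg.2 (hW x).le)
  have hcross : Integrable (fun x => 2 * (f x * conj (E x)).re) μ := hfE.re.const_mul 2
  have hint := ((hf.sub hcross).add hgE.re).congr (.of_forall fun x => (hexpand x).symm)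
  rw [← ofReal_integral_eq_lintegral_ofReal hint (hnonneg _),
    ← ofReal_integral_eq_lintegral_ofReal hf (hnonneg _)]
  refine ENNReal.ofReal_le_ofReal ?_
  rw [integral_congr_ae (.of_forall hexpand),
    integral_add (f := fun x => ‖f x‖ ^ 2 * (W x)⁻¹ - 2 * (f x * conj (E x)).re)
      (g := fun x => (g x * conj (E x)).re) (hf.sub hcross) hgE.re,
    integral_sub hf hcross, integral_const_mul]
  have hre : ∫ x, (f x * conj (E x)).re ∂μ = ∫ x, (g x * conj (E x)).re ∂μ :=
    (integral_re hfE).trans ((congrArg Complex.re horth).trans (integral_re hgE).symm)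
  have hgE_nonneg : 0 ≤ ∫ x, (g x * conj (E x)).re ∂μ := integral_nonneg fun x => by
    rw [hg, mul_assoc, Complex.mul_conj, ← Complex.ofReal_mul, Complex.ofReal_re]
    exact mul_nonneg (hW x).le (Complex.normSq_nonneg _)
  linarith

lemma enorm_sq_mul_ofReal {F : Type*} [NormedAddCommGroup F] (z : F) (t : ℝ) :
    ‖z‖ₑ ^ 2 * ENNReal.ofReal t = ENNReal.ofReal (‖z‖ ^ 2 * t) := by
  rw [ENNReal.ofReal_mul (sq_nonneg _), ENNReal.ofReal_pow (norm_nonneg _), ofReal_norm]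

lemma lintegral_ofReal_norm_sq_mul_le {F : Type*} [NormedAddCommGroup F] {a b : α → ℝ} {K : ℝ}
    (hK : 0 ≤ K) (hab : ∀ x, a x ≤ K * b x) (g : α → F) :
    ∫⁻ x, ENNReal.ofReal (‖g x‖ ^ 2 * a x) ∂μ
      ≤ ENNReal.ofReal K * ∫⁻ x, ENNReal.ofReal (‖g x‖ ^ 2 * b x) ∂μ := by
  rw [← lintegral_const_mul' _ _ ENNReal.ofReal_ne_top]
  refine lintegral_mono fun x => ?_
  rw [← ENNReal.ofReal_mul hK]
  refine ENNReal.ofReal_le_ofReal ?_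
  calc ‖g x‖ ^ 2 * a x ≤ ‖g x‖ ^ 2 * (K * b x) := by gcongr; exact hab x
    _ = K * (‖g x‖ ^ 2 * b x) := by ring

lemma lintegral_enorm_sub_sq_mul_le {f g E : α → ℂ} {W t : α → ℝ} {K₁ K₂ : ℝ}
    (hK₁ : 0 ≤ K₁) (hK₂ : 0 ≤ K₂) (hW : ∀ x, 0 < W x) (hg : ∀ x, g x = W x * E x)
    (hWt : ∀ x, (W x)⁻¹ ≤ K₁ * t x) (htW : ∀ x, t x ≤ K₂ * (W x)⁻¹)
    (hfm : AEStronglyMeasurable f μ) (hWm : AEStronglyMeasurable W μ)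
    (hf : ∫⁻ x, ‖f x‖ₑ ^ 2 * ENNReal.ofReal (t x) ∂μ < ∞)
    (hfE : Integrable (fun x => f x * conj (E x)) μ)
    (hgE : Integrable (fun x => g x * conj (E x)) μ)
    (horth : ∫ x, f x * conj (E x) ∂μ = ∫ x, g x * conj (E x) ∂μ) :
    ∫⁻ x, ‖f x - g x‖ₑ ^ 2 * ENNReal.ofReal (t x) ∂μ
      ≤ ENNReal.ofReal (K₁ * K₂) * ∫⁻ x, ‖f x‖ₑ ^ 2 * ENNReal.ofReal (t x) ∂μ := by
  simp only [enorm_sq_mul_ofReal] at hf ⊢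
  have hfW : Integrable (fun x => ‖f x‖ ^ 2 * (W x)⁻¹) μ := by
    refine ⟨(hfm.norm.pow 2).mul hWm.inv₀, (hasFiniteIntegral_iff_ofReal
      (.of_forall fun x => mul_nonneg (sq_nonneg _) (inv_nonneg.2 (hW x).le))).2 ?_⟩
    exact (lintegral_ofReal_norm_sq_mul_le hK₁ hWt f).trans_lt
      (ENNReal.mul_lt_top ENNReal.ofReal_lt_top hf)
  calc ∫⁻ x, ENNReal.ofReal (‖f x - g x‖ ^ 2 * t x) ∂μ
      ≤ ENNReal.ofReal K₂ * ∫⁻ x, ENNReal.ofReal (‖f x - g x‖ ^ 2 * (W x)⁻¹) ∂μ :=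
        lintegral_ofReal_norm_sq_mul_le hK₂ htW _
    _ ≤ ENNReal.ofReal K₂ * ∫⁻ x, ENNReal.ofReal (‖f x‖ ^ 2 * (W x)⁻¹) ∂μ :=
        mul_le_mul_right (lintegral_norm_sub_sq_mul_inv_le hW hg hfW hfE hgE horth) _
    _ ≤ ENNReal.ofReal K₂ * (ENNReal.ofReal K₁ * ∫⁻ x, ENNReal.ofReal (‖f x‖ ^ 2 * t x) ∂μ) :=
        mul_le_mul_right (lintegral_ofReal_norm_sq_mul_le hK₁ hWt f) _
    _ = ENNReal.ofReal (K₁ * K₂) * ∫⁻ x, ENNReal.ofReal (‖f x‖ ^ 2 * t x) ∂μ := by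
        rw [ENNReal.ofReal_mul hK₁]
        ring

end WeightedL2

lemma ENNReal.rpow_half_le_ofReal_mul_of_le_sq_mul {a b : ℝ≥0∞} {K : ℝ} (hK : 0 ≤ K)
    (h : a ≤ ENNReal.ofReal (K ^ 2) * b) :
    a ^ (1 / 2 : ℝ) ≤ ENNReal.ofReal K * b ^ (1 / 2 : ℝ) := by
  calc a ^ (1 / 2 : ℝ) ≤ (ENNReal.ofReal (K ^ 2) * b) ^ (1 / 2 : ℝ) := by gcongr
    _ = ENNReal.ofReal K * b ^ (1 / 2 : ℝ) := by
      rw [ENNReal.mul_rpow_of_nonneg _ _ (by norm_num), ENNReal.ofReal_rpow_of_nonneg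
        (sq_nonneg K) (by norm_num), ← Real.sqrt_eq_rpow, Real.sqrt_sq hK]

section JapaneseBracket

variable {E : Type*} [NormedAddCommGroup E] [NormedSpace ℝ E]

lemma le_sq_mul_add_inv (a : ℝ) {t : ℝ} (ht : 0 < t) : a ≤ a ^ 2 * t + t⁻¹ := by
  have hat : a * t ≤ (a * t) ^ 2 + 1 := by nlinarith [sq_nonneg (a * t - 1), sq_nonneg (a * t)]
  calc a = a * t * t⁻¹ := by field_simp
    _ ≤ ((a * t) ^ 2 + 1) * t⁻¹ := by gcongr
    _ = a ^ 2 * t + t⁻¹ := by field_simp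

section Integrability

variable [FiniteDimensional ℝ E] [MeasurableSpace E] [BorelSpace E] {μ : Measure E}
  [μ.IsAddHaarMeasure] {σ : ℝ}

lemma integrable_one_add_norm_sq_rpow_neg (hσ : (Module.finrank ℝ E : ℝ) < 2 * σ) :
    Integrable (fun x : E => (1 + ‖x‖ ^ 2) ^ (-σ)) μ := by
  simpa only [neg_div, mul_div_cancel_left₀ σ two_ne_zero]
    using integrable_rpow_neg_one_add_norm_sq (μ := μ) hσ

lemma integrable_of_lintegral_enorm_sq_mul_rpow_lt_top {F : Type*} [NormedAddCommGroup F]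
    {f : E → F} (hf : AEStronglyMeasurable f μ) (hσ : (Module.finrank ℝ E : ℝ) < 2 * σ)
    (hfin : ∫⁻ x, ‖f x‖ₑ ^ 2 * ENNReal.ofReal ((1 + ‖x‖ ^ 2) ^ σ) ∂μ < ∞) :
    Integrable f μ := by
  have hdecay := integrable_one_add_norm_sq_rpow_neg (μ := μ) hσ
  have hpoint : ∀ x, ‖f x‖ₑ ≤ ‖f x‖ₑ ^ 2 * ENNReal.ofReal ((1 + ‖x‖ ^ 2) ^ σ)
      + ENNReal.ofReal ((1 + ‖x‖ ^ 2) ^ (-σ)) := fun x => by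
    have ht : 0 < (1 + ‖x‖ ^ 2) ^ σ := by positivity
    rw [enorm_sq_mul_ofReal, ← ENNReal.ofReal_add (by positivity) (by positivity),
      ← ofReal_norm, Real.rpow_neg (by positivity)]
    exact ENNReal.ofReal_le_ofReal (le_sq_mul_add_inv _ ht)
  refine ⟨hf, ?_⟩
  calc ∫⁻ x, ‖f x‖ₑ ∂μ
      ≤ ∫⁻ x, ‖f x‖ₑ ^ 2 * ENNReal.ofReal ((1 + ‖x‖ ^ 2) ^ σ)
          + ENNReal.ofReal ((1 + ‖x‖ ^ 2) ^ (-σ)) ∂μ := lintegral_mono hpoint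
    _ = ∫⁻ x, ‖f x‖ₑ ^ 2 * ENNReal.ofReal ((1 + ‖x‖ ^ 2) ^ σ) ∂μ
          + ∫⁻ x, ENNReal.ofReal ((1 + ‖x‖ ^ 2) ^ (-σ)) ∂μ :=
        lintegral_add_right' _ hdecay.aemeasurable.ennreal_ofReal
    _ < ∞ := ENNReal.add_lt_top.2 ⟨hfin, hdecay.lintegral_lt_top⟩

end Integrability

variable {δ σ : ℝ}

lemma one_add_norm_sq_rpow_neg_le_smul (hδ₀ : 0 ≤ δ) (hδ₁ : δ ≤ 1) (hσ : 0 ≤ σ) (x : E) :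
    (1 + ‖x‖ ^ 2) ^ (-σ) ≤ (1 + ‖δ • x‖ ^ 2) ^ (-σ) := by
  have : ‖δ • x‖ ≤ ‖x‖ := by
    rw [norm_smul, Real.norm_of_nonneg hδ₀]
    exact mul_le_of_le_one_left (norm_nonneg _) hδ₁
  exact Real.rpow_le_rpow_of_nonpos (by positivity) (by gcongr) (neg_nonpos.2 hσ)

lemma one_add_norm_sq_rpow_le_mul_smul (hδ₀ : 0 < δ) (hδ₁ : δ ≤ 1) (hσ : 0 ≤ σ) (x : E) :
    (1 + ‖x‖ ^ 2) ^ σ ≤ (δ ^ (-σ)) ^ 2 * (1 + ‖δ • x‖ ^ 2) ^ σ := by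
  have hδ2 : 1 ≤ (δ ^ 2)⁻¹ := one_le_inv₀ (by positivity) |>.2 (pow_le_one₀ hδ₀.le hδ₁)
  have hbase : 1 + ‖x‖ ^ 2 ≤ (δ ^ 2)⁻¹ * (1 + ‖δ • x‖ ^ 2) := by
    rw [norm_smul, Real.norm_of_nonneg hδ₀.le, mul_pow, mul_add,
      inv_mul_cancel_left₀ (by positivity)]
    linarith
  calc (1 + ‖x‖ ^ 2) ^ σ ≤ ((δ ^ 2)⁻¹ * (1 + ‖δ • x‖ ^ 2)) ^ σ := by gcongr
    _ = (δ ^ (-σ)) ^ 2 * (1 + ‖δ • x‖ ^ 2) ^ σ := by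
      rw [Real.mul_rpow (by positivity) (by positivity), Real.inv_rpow (by positivity),
        ← Real.rpow_pow_comm hδ₀.le, Real.rpow_neg hδ₀.le, inv_pow]

variable {φ : E → ℝ} {c₁ c₂ : ℝ}

lemma inv_apply_smul_le_of_lower_bound (hc₁ : 0 < c₁) (hσ : 0 ≤ σ) (hδ₀ : 0 ≤ δ) (hδ₁ : δ ≤ 1)
    (hφ : ∀ x, c₁ * (1 + ‖x‖ ^ 2) ^ (-σ) ≤ φ x) (x : E) :
    (φ (δ • x))⁻¹ ≤ c₁⁻¹ * (1 + ‖x‖ ^ 2) ^ σ := by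
  have hlow : c₁ * (1 + ‖x‖ ^ 2) ^ (-σ) ≤ φ (δ • x) :=
    (mul_le_mul_of_nonneg_left (one_add_norm_sq_rpow_neg_le_smul hδ₀ hδ₁ hσ x) hc₁.le).trans
      (hφ _)
  calc (φ (δ • x))⁻¹ ≤ (c₁ * (1 + ‖x‖ ^ 2) ^ (-σ))⁻¹ := inv_anti₀ (by positivity) hlow
    _ = c₁⁻¹ * (1 + ‖x‖ ^ 2) ^ σ := by rw [mul_inv, Real.rpow_neg (by positivity), inv_inv]

lemma one_add_norm_sq_rpow_le_of_upper_bound (hσ : 0 ≤ σ) (hδ₀ : 0 < δ) (hδ₁ : δ ≤ 1)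
    (hφ₀ : ∀ x, 0 < φ x) (hφ : ∀ x, φ x ≤ c₂ * (1 + ‖x‖ ^ 2) ^ (-σ)) (x : E) :
    (1 + ‖x‖ ^ 2) ^ σ ≤ c₂ * (δ ^ (-σ)) ^ 2 * (φ (δ • x))⁻¹ := by
  have hup : (1 + ‖δ • x‖ ^ 2) ^ σ ≤ c₂ * (φ (δ • x))⁻¹ := by
    rw [← div_eq_mul_inv, le_div_iff₀ (hφ₀ _), ← le_div_iff₀' (by positivity), div_eq_mul_inv,
      ← Real.rpow_neg (by positivity)]
    exact hφ _
  calc (1 + ‖x‖ ^ 2) ^ σ ≤ (δ ^ (-σ)) ^ 2 * (1 + ‖δ • x‖ ^ 2) ^ σ :=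
        one_add_norm_sq_rpow_le_mul_smul hδ₀ hδ₁ hσ x
    _ ≤ (δ ^ (-σ)) ^ 2 * (c₂ * (φ (δ • x))⁻¹) := by gcongr
    _ = c₂ * (δ ^ (-σ)) ^ 2 * (φ (δ • x))⁻¹ := by ring

end JapaneseBracket

section Fourier

variable {d : ℕ}

local notation "V" => EuclideanSpace ℝ (Fin d)

lemma norm_exp_neg_I_mul_ofReal (t : ℝ) : ‖exp (-(I * t))‖ = 1 := by
  rw [← mul_neg, ← ofReal_neg]
  exact norm_exp_I_mul_ofReal _

lemma integrable_exp_neg_I_inner_mul {f : V → ℂ} (hf : Integrable f) (ω : V) :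
    Integrable fun x => exp (-(I * ⟪x, ω⟫)) * f x :=
  hf.bdd_mul (by fun_prop) (c := 1) (.of_forall fun x => (norm_exp_neg_I_mul_ofReal _).le)

lemma ftrans_eq_fourier (f : V → ℂ) (ω : V) :
    ftrans f ω = ((2 * π) ^ (-(d : ℝ) / 2) : ℝ) * 𝓕 f ((2 * π)⁻¹ • ω) := by
  rw [ftrans, Real.fourier_eq']
  congr 1
  refine integral_congr_ae (.of_forall fun x => ?_)
  dsimp only
  have h2π : -2 * π * (2 * π)⁻¹ = -1 := by field_simp
  rw [smul_eq_mul, real_inner_smul_right, ← mul_assoc, h2π]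
  push_cast
  ring_nf

lemma continuous_ftrans {f : V → ℂ} (hf : Integrable f) : Continuous (ftrans f) := by
  rw [funext (ftrans_eq_fourier f)]
  have h𝓕 : Continuous (𝓕 f) := VectorFourier.fourierIntegral_continuous (L := innerₗ V)
    Real.continuous_fourierChar continuous_inner hf
  exact continuous_const.mul (h𝓕.comp (continuous_const_smul _))

lemma ftrans_two_pi_smul (f : V → ℂ) (ξ : V) :
    ftrans f ((2 * π) • ξ) = ((2 * π) ^ (-(d : ℝ) / 2) : ℝ) * 𝓕 f ξ := by
  rw [ftrans_eq_fourier, inv_smul_smul₀ Real.two_pi_pos.ne']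

lemma integrable_fourier_of_integrable_ftrans {f : V → ℂ} (hf : Integrable (ftrans f)) :
    Integrable (𝓕 f) := by
  have h := (hf.comp_smul Real.two_pi_pos.ne').const_mul (((2 * π) ^ ((d : ℝ) / 2) : ℝ) : ℂ)
  refine h.congr (.of_forall fun ξ => ?_)
  dsimp only
  rw [ftrans_two_pi_smul, ← mul_assoc, ← Complex.ofReal_mul,
    ← Real.rpow_add Real.two_pi_pos, neg_div, add_neg_cancel,
    Real.rpow_zero, Complex.ofReal_one, one_mul]

lemma integral_ftrans_mul_exp_I_inner {f : V → ℂ} (hf : Continuous f) (hfi : Integrable f)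
    (hf' : Integrable (ftrans f)) (y : V) :
    ∫ ω, ftrans f ω * exp (I * ⟪y, ω⟫) = ((2 * π) ^ ((d : ℝ) / 2) : ℝ) * f y := by
  have h2π := Real.two_pi_pos
  have hinv := hfi.fourierInv_fourier_eq (integrable_fourier_of_integrable_ftrans hf')
    hf.continuousAt (v := y)
  calc ∫ ω, ftrans f ω * exp (I * ⟪y, ω⟫)
      = (2 * π) ^ d • ∫ ξ : V, ftrans f ((2 * π) • ξ) * exp (I * ⟪y, (2 * π) • ξ⟫) := by
        rw [Measure.integral_comp_smul_of_nonneg volume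
          (fun ω : V => ftrans f ω * exp (I * ⟪y, ω⟫)) _ (hR := h2π.le),
          finrank_euclideanSpace_fin, smul_inv_smul₀ (pow_ne_zero _ h2π.ne')]
    _ = (2 * π) ^ d • (((2 * π) ^ (-(d : ℝ) / 2) : ℝ) * 𝓕⁻ (𝓕 f) y) := by
        rw [Real.fourierInv_eq', ← integral_const_mul]
        congr 1
        refine integral_congr_ae (.of_forall fun ξ => ?_)
        simp only [ftrans_two_pi_smul, real_inner_smul_right, real_inner_comm ξ y, smul_eq_mul]
        push_cast
        ring_nf
    _ = ((2 * π) ^ ((d : ℝ) / 2) : ℝ) * f y := by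
        rw [hinv, real_smul, ← mul_assoc, ← Complex.ofReal_mul, ← Real.rpow_natCast,
          ← Real.rpow_add h2π]
        ring_nf

lemma ftrans_sub {f g : V → ℂ} (hf : Integrable f) (hg : Integrable g) (ω : V) :
    ftrans (fun x => f x - g x) ω = ftrans f ω - ftrans g ω := by
  simp only [ftrans, mul_sub]
  rw [integral_sub (integrable_exp_neg_I_inner_mul hf ω) (integrable_exp_neg_I_inner_mul hg ω),
    mul_sub]

lemma ftrans_sum {ι : Type*} (s : Finset ι) {f : ι → V → ℂ} (hf : ∀ i ∈ s, Integrable (f i))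
    (ω : V) : ftrans (fun x => ∑ i ∈ s, f i x) ω = ∑ i ∈ s, ftrans (f i) ω := by
  simp only [ftrans, Finset.mul_sum]
  rw [integral_finsetSum s fun i hi => integrable_exp_neg_I_inner_mul (hf i hi) ω,
    Finset.mul_sum]

lemma ftrans_const_mul (a : ℂ) (f : V → ℂ) (ω : V) :
    ftrans (fun x => a * f x) ω = a * ftrans f ω := by
  simp only [ftrans, mul_left_comm _ a, integral_const_mul]

lemma ftrans_comp_sub (f : V → ℂ) (y ω : V) :
    ftrans (fun x => f (x - y)) ω = exp (-(I * ⟪y, ω⟫)) * ftrans f ω := by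
  have h : ∫ x, exp (-(I * ⟪x, ω⟫)) * f (x - y)
      = exp (-(I * ⟪y, ω⟫)) * ∫ x, exp (-(I * ⟪x, ω⟫)) * f x := by
    rw [← integral_add_right_eq_self _ y, ← integral_const_mul]
    refine integral_congr_ae (.of_forall fun x => ?_)
    simp only [add_sub_cancel_right, inner_add_left, Complex.ofReal_add, mul_add, neg_add, exp_add]
    ring
  rw [ftrans, ftrans, h, mul_left_comm]

lemma ftrans_comp_inv_smul (f : V → ℂ) {δ : ℝ} (hδ : 0 < δ) (ω : V) :
    ftrans (fun x => f (δ⁻¹ • x)) ω = δ ^ d * ftrans f (δ • ω) := by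
  have h := Measure.integral_comp_inv_smul_of_nonneg volume
    (fun x : V => exp (-(I * ⟪δ • x, ω⟫)) * f x) hδ.le
  simp only [finrank_euclideanSpace_fin, smul_inv_smul₀ hδ.ne'] at h
  rw [ftrans, ftrans, h, real_smul, mul_left_comm]
  simp only [real_inner_smul_left, real_inner_smul_right, Complex.ofReal_pow]

end Fourier

section Kernel

variable {d : ℕ}

local notation "V" => EuclideanSpace ℝ (Fin d)

noncomputable def expSum (Y : Finset V) (c : V → ℝ) (ω : V) : ℂ :=
  ∑ y ∈ Y, (c y : ℂ) * exp (-(I * ⟪y, ω⟫))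

noncomputable def kernelSum (Φ : V → ℝ) (δ : ℝ) (Y : Finset V) (c : V → ℝ) (x : V) : ℝ :=
  ∑ y ∈ Y, c y * ((δ ^ d)⁻¹ * Φ (δ⁻¹ • (x - y)))

variable {Y : Finset (EuclideanSpace ℝ (Fin d))} {c : EuclideanSpace ℝ (Fin d) → ℝ}

lemma norm_expSum_le (ω : V) : ‖expSum Y c ω‖ ≤ ∑ y ∈ Y, |c y| := by
  refine (norm_sum_le _ _).trans (Finset.sum_le_sum fun y _ => ?_)
  rw [norm_mul, norm_exp_neg_I_mul_ofReal, mul_one, Complex.norm_real, Real.norm_eq_abs]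

lemma continuous_expSum : Continuous (expSum Y c) := by
  unfold expSum
  fun_prop

lemma MeasureTheory.Integrable.mul_conj_expSum {g : V → ℂ} (hg : Integrable g) :
    Integrable fun ω => g ω * conj (expSum Y c ω) :=
  hg.mul_bdd continuous_expSum.star.aestronglyMeasurable
    (.of_forall fun ω => by rw [Complex.norm_conj]; exact norm_expSum_le ω)

lemma integral_ftrans_mul_conj_expSum {f : V → ℂ} (hf : Continuous f) (hfi : Integrable f)
    (hf' : Integrable (ftrans f)) :
    ∫ ω, ftrans f ω * conj (expSum Y c ω)
      = ((2 * π) ^ ((d : ℝ) / 2) : ℝ) * ∑ y ∈ Y, c y * f y := by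
  have hconj : ∀ ω, ftrans f ω * conj (expSum Y c ω)
      = ∑ y ∈ Y, (c y : ℂ) * (ftrans f ω * exp (I * ⟪y, ω⟫)) := fun ω => by
    simp only [expSum, map_sum, map_mul, ← exp_conj, map_neg, conj_I, Complex.conj_ofReal,
      Finset.mul_sum, neg_mul, neg_neg]
    exact Finset.sum_congr rfl fun y _ => by ring
  have hint : ∀ y, Integrable fun ω => ftrans f ω * exp (I * ⟪y, ω⟫) := fun y =>
    hf'.mul_bdd (by fun_prop) (.of_forall fun ω => (norm_exp_I_mul_ofReal _).le)
  simp only [hconj, integral_finsetSum Y fun y _ => (hint y).const_mul _, integral_const_mul,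
    integral_ftrans_mul_exp_I_inner hf hfi hf', Finset.mul_sum]
  exact Finset.sum_congr rfl fun y _ => mul_left_comm _ _ _

variable {Φ : EuclideanSpace ℝ (Fin d) → ℝ} {δ : ℝ}

lemma continuous_kernelSum (hΦ : Continuous Φ) : Continuous (kernelSum Φ δ Y c) := by
  unfold kernelSum
  fun_prop

lemma integrable_kernelSum (hΦ : Integrable fun x => (Φ x : ℂ)) (hδ : δ ≠ 0) :
    Integrable fun x => (kernelSum Φ δ Y c x : ℂ) := by
  simp only [kernelSum, Complex.ofReal_sum, Complex.ofReal_mul]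
  exact integrable_finsetSum Y fun y _ =>
    (((hΦ.comp_smul (inv_ne_zero hδ)).comp_sub_right y).const_mul _).const_mul _

lemma ftrans_kernelSum (hΦ : Integrable fun x => (Φ x : ℂ)) (hδ : 0 < δ) (ω : V) :
    ftrans (fun x => (kernelSum Φ δ Y c x : ℂ)) ω
      = ftrans (fun x => (Φ x : ℂ)) (δ • ω) * expSum Y c ω := by
  have hterm : ∀ y, Integrable fun x => (Φ (δ⁻¹ • (x - y)) : ℂ) := fun y =>
    (hΦ.comp_smul (inv_ne_zero hδ.ne')).comp_sub_right y
  simp only [kernelSum, Complex.ofReal_sum, Complex.ofReal_mul]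
  rw [ftrans_sum Y fun y _ => ((hterm y).const_mul _).const_mul _, expSum, Finset.mul_sum]
  refine Finset.sum_congr rfl fun y _ => ?_
  rw [ftrans_const_mul, ftrans_const_mul, ftrans_comp_sub (fun x => (Φ (δ⁻¹ • x) : ℂ)),
    ftrans_comp_inv_smul (fun x => (Φ x : ℂ)) hδ]
  have : (δ : ℂ) ^ d ≠ 0 := pow_ne_zero _ (Complex.ofReal_ne_zero.2 hδ.ne')
  push_cast
  field_simp

lemma integrable_ftrans_kernelSum (hΦ : Integrable fun x => (Φ x : ℂ))
    (hΦ' : Integrable (ftrans fun x => (Φ x : ℂ))) (hδ : 0 < δ) :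
    Integrable (ftrans fun x => (kernelSum Φ δ Y c x : ℂ)) := by
  refine ((hΦ'.comp_smul hδ.ne').mul_bdd continuous_expSum.aestronglyMeasurable
    (.of_forall norm_expSum_le)).congr (.of_forall fun ω => (ftrans_kernelSum hΦ hδ ω).symm)

lemma integral_ftrans_mul_conj_expSum_eq_of_interp (hΦc : Continuous Φ)
    (hΦ : Integrable fun x => (Φ x : ℂ)) (hΦ' : Integrable (ftrans fun x => (Φ x : ℂ)))
    (hδ : 0 < δ) {u : V → ℂ} (hu : Continuous u) (hui : Integrable u)
    (hu' : Integrable (ftrans u)) (hinterp : ∀ y ∈ Y, (kernelSum Φ δ Y c y : ℂ) = u y) :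
    ∫ ω, ftrans u ω * conj (expSum Y c ω)
      = ∫ ω, ftrans (fun x => (kernelSum Φ δ Y c x : ℂ)) ω * conj (expSum Y c ω) := by
  rw [integral_ftrans_mul_conj_expSum hu hui hu', integral_ftrans_mul_conj_expSum
    (f := fun x => (kernelSum Φ δ Y c x : ℂ))
    (Complex.continuous_ofReal.comp (continuous_kernelSum hΦc)) (integrable_kernelSum hΦ hδ.ne')
    (integrable_ftrans_kernelSum hΦ hΦ' hδ)]
  exact congrArg _ (Finset.sum_congr rfl fun y hy => by rw [hinterp y hy])

end Kernel

section Stability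

variable {d : ℕ} {σ c₁ c₂ δ : ℝ} {Φ φ : EuclideanSpace ℝ (Fin d) → ℝ}
  {Y : Finset (EuclideanSpace ℝ (Fin d))} {c : EuclideanSpace ℝ (Fin d) → ℝ}

lemma lintegral_ftrans_sub_kernelSum_le (hσ : (d : ℝ) < 2 * σ) (hc₁ : 0 < c₁) (hc₂ : 0 ≤ c₂)
    (hΦc : Continuous Φ) (hΦ : Integrable fun x => (Φ x : ℂ))
    (hφ : ∀ ω, ftrans (fun x => (Φ x : ℂ)) ω = φ ω)
    (hlow : ∀ ω, c₁ * (1 + ‖ω‖ ^ 2) ^ (-σ) ≤ φ ω) (hup : ∀ ω, φ ω ≤ c₂ * (1 + ‖ω‖ ^ 2) ^ (-σ))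
    (hδ : 0 < δ) (hδ₁ : δ ≤ 1) {u : EuclideanSpace ℝ (Fin d) → ℂ} (hu : Continuous u)
    (hui : Integrable u)
    (hufin : ∫⁻ ω, ‖ftrans u ω‖ₑ ^ 2 * ENNReal.ofReal ((1 + ‖ω‖ ^ 2) ^ σ) < ∞)
    (hinterp : ∀ y ∈ Y, (kernelSum Φ δ Y c y : ℂ) = u y) :
    ∫⁻ ω, ‖ftrans (fun x => u x - (kernelSum Φ δ Y c x : ℂ)) ω‖ₑ ^ 2
        * ENNReal.ofReal ((1 + ‖ω‖ ^ 2) ^ σ)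
      ≤ ENNReal.ofReal (c₁⁻¹ * (c₂ * (δ ^ (-σ)) ^ 2))
        * ∫⁻ ω, ‖ftrans u ω‖ₑ ^ 2 * ENNReal.ofReal ((1 + ‖ω‖ ^ 2) ^ σ) := by
  have hσ₀ : 0 ≤ σ := by linarith [(Nat.cast_nonneg d : (0 : ℝ) ≤ d)]
  have hdim : (Module.finrank ℝ (EuclideanSpace ℝ (Fin d)) : ℝ) < 2 * σ := by
    rwa [finrank_euclideanSpace_fin]
  have hφ₀ : ∀ ω, 0 < φ ω := fun ω =>
    (mul_pos hc₁ (Real.rpow_pos_of_pos (by positivity) _)).trans_le (hlow ω)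
  have hφc : Continuous φ :=
    (continuous_re.comp (continuous_ftrans hΦ)).congr fun ω => by
      simp only [Function.comp_apply, hφ, Complex.ofReal_re]
  have hΦ' : Integrable (ftrans fun x => (Φ x : ℂ)) :=
    ((integrable_one_add_norm_sq_rpow_neg hdim).const_mul c₂).mono'
      (continuous_ftrans hΦ).aestronglyMeasurable (.of_forall fun ω => by
        rw [hφ, Complex.norm_real, Real.norm_of_nonneg (hφ₀ ω).le]; exact hup ω)
  have hû := integrable_of_lintegral_enorm_sq_mul_rpow_lt_top
    (continuous_ftrans hui).aestronglyMeasurable hdim hufin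
  simp only [ftrans_sub hui (integrable_kernelSum hΦ hδ.ne')]
  exact lintegral_enorm_sub_sq_mul_le (inv_nonneg.2 hc₁.le) (mul_nonneg hc₂ (sq_nonneg _))
    (fun ω => hφ₀ (δ • ω)) (fun ω => by rw [ftrans_kernelSum hΦ hδ, hφ])
    (inv_apply_smul_le_of_lower_bound hc₁ hσ₀ hδ.le hδ₁ hlow)
    (one_add_norm_sq_rpow_le_of_upper_bound hσ₀ hδ hδ₁ hφ₀ hup)
    (continuous_ftrans hui).aestronglyMeasurable
    (hφc.comp (continuous_const_smul δ)).aestronglyMeasurable hufin hû.mul_conj_expSum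
    (integrable_ftrans_kernelSum hΦ hΦ' hδ).mul_conj_expSum
    (integral_ftrans_mul_conj_expSum_eq_of_interp hΦc hΦ hΦ' hδ hu hui hû hinterp)

end Stability

theorem stmt9_general (d : ℕ) (σ : ℝ) (hσ : (d : ℝ) / 2 + 2 < σ)
    (c₁ c₂ : ℝ) (hc₁ : 0 < c₁) (hc₁₂ : c₁ ≤ c₂)
    (Φ : EuclideanSpace ℝ (Fin d) → ℝ) (hΦc : Continuous Φ)
    (hΦi : Integrable (fun x => (Φ x : ℂ)))
    (hlow : ∀ ω, c₁ * (1 + ‖ω‖ ^ 2) ^ (-σ) ≤ (ftrans (fun x => (Φ x : ℂ)) ω).re)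
    (hup : ∀ ω, (ftrans (fun x => (Φ x : ℂ)) ω).re ≤ c₂ * (1 + ‖ω‖ ^ 2) ^ (-σ))
    (hreal : ∀ ω, (ftrans (fun x => (Φ x : ℂ)) ω).im = 0) :
    ∃ C > (0 : ℝ), ∀ δ : ℝ, 0 < δ → δ ≤ 1 →
      ∀ (Y : Finset (EuclideanSpace ℝ (Fin d))), 2 ≤ Y.card →
      ∀ u : EuclideanSpace ℝ (Fin d) → ℂ, Continuous u → Integrable u → MemLp u 2 →
        (∫⁻ ω, (‖ftrans u ω‖₊ : ℝ≥0∞) ^ 2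
            * ENNReal.ofReal ((1 + ‖ω‖ ^ 2) ^ σ)) ^ (1/2 : ℝ) < ∞ →
      ∀ c : EuclideanSpace ℝ (Fin d) → ℝ, ∀ s : EuclideanSpace ℝ (Fin d) → ℝ,
        (∀ x, s x = ∑ y ∈ Y, c y * ((δ ^ d)⁻¹ * Φ (δ⁻¹ • (x - y)))) →
        (∀ y ∈ Y, (s y : ℂ) = u y) →
        (∫⁻ ω, (‖ftrans (fun x => u x - (s x : ℂ)) ω‖₊ : ℝ≥0∞) ^ 2
            * ENNReal.ofReal ((1 + ‖ω‖ ^ 2) ^ σ)) ^ (1/2 : ℝ)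
          ≤ ENNReal.ofReal (C * δ ^ (-σ)) *
            (∫⁻ ω, (‖ftrans u ω‖₊ : ℝ≥0∞) ^ 2
              * ENNReal.ofReal ((1 + ‖ω‖ ^ 2) ^ σ)) ^ (1/2 : ℝ) := by
  have hc₂ : 0 < c₂ := hc₁.trans_le hc₁₂
  refine ⟨√(c₂ / c₁), Real.sqrt_pos.2 (div_pos hc₂ hc₁),
    fun δ hδ hδ₁ Y _ u hu hui _ hufin c s hs hinterp => ?_⟩
  obtain rfl : s = kernelSum Φ δ Y c := funext hs
  have key := lintegral_ftrans_sub_kernelSum_le (φ := fun ω => (ftrans (fun x => (Φ x : ℂ)) ω).re)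
    (by linarith) hc₁ hc₂.le hΦc hΦi (fun ω => Complex.ext rfl (hreal ω)) hlow hup hδ hδ₁ hu hui
    ((ENNReal.rpow_lt_top_iff_of_pos (by norm_num)).1 hufin) hinterp
  refine ENNReal.rpow_half_le_ofReal_mul_of_le_sq_mul
    (mul_nonneg (Real.sqrt_nonneg _) (Real.rpow_nonneg hδ.le _)) ?_
  have hK : (√(c₂ / c₁) * δ ^ (-σ)) ^ 2 = c₁⁻¹ * (c₂ * (δ ^ (-σ)) ^ 2) := by
    rw [mul_pow, Real.sq_sqrt (div_pos hc₂ hc₁).le]; ring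
  simpa only [hK, enorm_eq_nnnorm] using key

theorem stmt9 (d : ℕ) (hd : 1 ≤ d) (σ : ℝ) (hσ : (d : ℝ) / 2 + 2 < σ)
    (c₁ c₂ : ℝ) (hc₁ : 0 < c₁) (hc₁₂ : c₁ ≤ c₂)
    (Φ : EuclideanSpace ℝ (Fin d) → ℝ) (hΦc : Continuous Φ)
    (hΦeven : ∀ x, Φ (-x) = Φ x)
    (hΦi : Integrable (fun x => (Φ x : ℂ)))
    (hlow : ∀ ω, c₁ * (1 + ‖ω‖ ^ 2) ^ (-σ) ≤ (ftrans (fun x => (Φ x : ℂ)) ω).re)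
    (hup : ∀ ω, (ftrans (fun x => (Φ x : ℂ)) ω).re ≤ c₂ * (1 + ‖ω‖ ^ 2) ^ (-σ))
    (hreal : ∀ ω, (ftrans (fun x => (Φ x : ℂ)) ω).im = 0) :
    ∃ C > (0 : ℝ), ∀ δ : ℝ, 0 < δ → δ ≤ 1 →
      ∀ (Y : Finset (EuclideanSpace ℝ (Fin d))), 2 ≤ Y.card →
      ∀ u : EuclideanSpace ℝ (Fin d) → ℂ, Continuous u → Integrable u → MemLp u 2 →
        (∫⁻ ω, (‖ftrans u ω‖₊ : ℝ≥0∞) ^ 2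
            * ENNReal.ofReal ((1 + ‖ω‖ ^ 2) ^ σ)) ^ (1/2 : ℝ) < ∞ →
      ∀ c : EuclideanSpace ℝ (Fin d) → ℝ, ∀ s : EuclideanSpace ℝ (Fin d) → ℝ,
        (∀ x, s x = ∑ y ∈ Y, c y * ((δ ^ d)⁻¹ * Φ (δ⁻¹ • (x - y)))) →
        (∀ y ∈ Y, (s y : ℂ) = u y) →
        (∫⁻ ω, (‖ftrans (fun x => u x - (s x : ℂ)) ω‖₊ : ℝ≥0∞) ^ 2
            * ENNReal.ofReal ((1 + ‖ω‖ ^ 2) ^ σ)) ^ (1/2 : ℝ)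
          ≤ ENNReal.ofReal (C * δ ^ (-σ)) *
            (∫⁻ ω, (‖ftrans u ω‖₊ : ℝ≥0∞) ^ 2
              * ENNReal.ofReal ((1 + ‖ω‖ ^ 2) ^ σ)) ^ (1/2 : ℝ) :=
  stmt9_general d σ hσ c₁ c₂ hc₁ hc₁₂ Φ hΦc hΦi hlow hup hreal
end
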